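/- Let S = {A, B, C} and consider the concurrent-free multiset rewriting system M = (X, M₀, ζ) with M₀ = {A, B}, X = {μ₁ : {A, B} → {A, C}, μ₂ : {A} → {A, B}, ε} and ζ = {(μ₂, μ₁)}. Then for every ordered multiset rewriting system M' over S, the set of runs of M differs from the set of runs of M'. Hence the generative power of concurrent-free MRS is not included in that of ordered MRS. -/
import Mathlib


/-- A multiset over a set of elements `S`, given by multiplicities. -/
abbrev MSet (S : Type) := S → ℕ

/-- Submultiset relation (pointwise `≤`). -/
def MSub {S : Type} (A M : MSet S) : Prop := ∀ s, A s ≤ M s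

/-- A multiset rewriting rule `μ = (•μ, μ•)`. -/
abbrev Rule (S : Type) := MSet S × MSet S

/-- The empty rule `ε = (∅, ∅)`. -/
def epsRule (S : Type) : Rule S := (fun _ => 0, fun _ => 0)

/-- A rule is enabled at `M` when its left-hand side is a submultiset of `M`. -/
def Enabled {S : Type} (μ : Rule S) (M : MSet S) : Prop := MSub μ.1 M

/-- The multiset `(M \ •μ) ∪ μ•` obtained by applying a rule. -/
def ApplyRule {S : Type} (μ : Rule S) (M : MSet S) : MSet S :=
  fun s => M s - μ.1 s + μ.2 s

/-- A single rewriting step of the rule set `X`: the rule belongs to `X`,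
is enabled, produces `M'`, and the empty rule `ε` is applied only when no
other rule of `X` is enabled. -/
def MStep {S : Type} (X : Set (Rule S)) (M : MSet S) (μ : Rule S) (M' : MSet S) : Prop :=
  μ ∈ X ∧ Enabled μ M ∧ M' = ApplyRule μ M ∧
    (μ = epsRule S → ∀ ν ∈ X, ν ≠ epsRule S → ¬ Enabled ν M)

/-- A multiset rewriting system over `S`: a finite set of rules containing
the empty rule, together with an initial multiset. -/
structure MRS (S : Type) where
  X : Set (Rule S)
  finX : X.Finite
  M0 : MSet S
  eps_mem : epsRule S ∈ X

/-- `π` is a run of `M` with run label `lbl`, where `lbl i` is the rule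
applied in step `i + 1` (the paper's `π⃗[i+1]`, rewriting `π i` to `π (i+1)`). -/
def IsRunWith {S : Type} (M : MRS S) (π : ℕ → MSet S) (lbl : ℕ → Rule S) : Prop :=
  π 0 = M.M0 ∧ ∀ i, MStep M.X (π i) (lbl i) (π (i + 1))

/-- The semantics of an unregulated MRS: its set of runs (labels disregarded). -/
def runs {S : Type} (M : MRS S) : Set (ℕ → MSet S) :=
  { π | ∃ lbl, IsRunWith M π lbl }

/-- `ζ` is a strict partial order on rules. -/
def IsStrictOrderRel {S : Type} (ζ : Rule S → Rule S → Prop) : Prop :=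
  (∀ μ, ¬ ζ μ μ) ∧ ∀ a b c, ζ a b → ζ b c → ζ a c

/-- Runs of the ordered MRS `(X, M₀, ζ)`: for every `i > 0`,
it is not the case that `π⃗[i+1] < π⃗[i]`. -/
def orderedRuns {S : Type} (M : MRS S) (ζ : Rule S → Rule S → Prop) :
    Set (ℕ → MSet S) :=
  { π | ∃ lbl, IsRunWith M π lbl ∧ ∀ i, ¬ ζ (lbl (i + 1)) (lbl i) }

/-- Two rules are concurrent iff their left-hand sides share an element. -/
def Concurrent {S : Type} (μ ν : Rule S) : Prop := ∃ s, 0 < μ.1 s ∧ 0 < ν.1 s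

/-- A valid concurrent-free regulation: an irreflexive relation on the rules
of `X` relating only concurrent rules, such that `(μ, ν) ∈ ζ` implies that
`(ν, μ)` is not in the transitive closure of `ζ`. -/
def CFValid {S : Type} (X : Set (Rule S)) (ζ : Rule S → Rule S → Prop) : Prop :=
  (∀ μ, ¬ ζ μ μ) ∧ (∀ μ ν, ζ μ ν → μ ∈ X ∧ ν ∈ X ∧ Concurrent μ ν) ∧
    ∀ μ ν, ζ μ ν → ¬ Relation.TransGen ζ ν μ

/-- Runs of the concurrent-free MRS `(X, M₀, ζ)`: for every `i > 0` and every
rule `μ ∈ X` enabled at `π[i]`, `(π⃗[i+1], μ) ∉ ζ`. -/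
def cfRuns {S : Type} (M : MRS S) (ζ : Rule S → Rule S → Prop) :
    Set (ℕ → MSet S) :=
  { π | ∃ lbl, IsRunWith M π lbl ∧
      ∀ i, ∀ μ ∈ M.X, Enabled μ (π (i + 1)) → ¬ ζ (lbl (i + 1)) μ }

/-- `μ₁ : {A, B} → {A, C}` over `S = {A, B, C}` (`A = 0`, `B = 1`, `C = 2`). -/
def mu1 : Rule (Fin 3) := (![1, 1, 0], ![1, 0, 1])

/-- `μ₂ : {A} → {A, B}`. -/
def mu2 : Rule (Fin 3) := (![1, 0, 0], ![1, 1, 0])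

/-- The MRS with `M₀ = {A, B}` and `X = {μ₁, μ₂, ε}`. -/
def Mcf : MRS (Fin 3) where
  X := {mu1, mu2, epsRule (Fin 3)}
  finX := Set.toFinite _
  M0 := ![1, 1, 0]
  eps_mem := by simp

/-- The priority relation `ζ = {(μ₂, μ₁)}`. -/
def zetaCF : Rule (Fin 3) → Rule (Fin 3) → Prop := fun a b => a = mu2 ∧ b = mu1

lemma mu1_ne_mu2 : mu1 ≠ mu2 := by
  intro h
  have := congrFun (congrArg Prod.fst h) 1
  simp [mu1, mu2] at this

lemma no_transgen_mu1 : ∀ b, Relation.TransGen zetaCF mu1 b → False := by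
  intro b h
  induction h with
  | single h => exact mu1_ne_mu2 h.1
  | tail _ _ ih => exact ih

lemma mu1_ne_eps : mu1 ≠ epsRule (Fin 3) := by
  intro h
  have := congrFun (congrArg Prod.fst h) 0
  simp [mu1, epsRule] at this

lemma mu2_ne_eps : mu2 ≠ epsRule (Fin 3) := by
  intro h
  have := congrFun (congrArg Prod.fst h) 0
  simp [mu2, epsRule] at this

/-- The states of the run of the concurrent-free system that starts with `μ₂`. -/
def piB : ℕ → MSet (Fin 3)
  | 0 => ![1, 1, 0]
  | 1 => ![1, 2, 0]
  | (n + 2) => if n % 2 = 0 then ![1, 1, n / 2 + 1] else ![1, 0, n / 2 + 2]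

/-- The labels of that run. -/
def lblB : ℕ → Rule (Fin 3)
  | 0 => mu2
  | 1 => mu1
  | (n + 2) => if n % 2 = 0 then mu1 else mu2

lemma piB_mem_cfRuns : piB ∈ cfRuns Mcf zetaCF := by
  refine ⟨lblB, ⟨rfl, ?_⟩, ?_⟩
  · intro i
    match i with
    | 0 =>
      refine ⟨by simp [Mcf, lblB], ?_, ?_, ?_⟩
      · intro s; fin_cases s <;> simp [mu2, piB, lblB]
      · funext s; fin_cases s <;> simp [mu2, piB, lblB, ApplyRule]
      · intro h; exact absurd (show mu2 = epsRule (Fin 3) from h) mu2_ne_eps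
    | 1 =>
      refine ⟨by simp [Mcf, lblB], ?_, ?_, ?_⟩
      · intro s; fin_cases s <;> simp [mu1, piB, lblB]
      · funext s; fin_cases s <;> simp [mu1, piB, lblB, ApplyRule]
      · intro h; exact absurd (show mu1 = epsRule (Fin 3) from h) mu1_ne_eps
    | (n + 2) =>
      rcases Nat.even_or_odd n with he | ho
      · have h2 : n % 2 = 0 := Nat.even_iff.mp he
        have h2' : (n + 1) % 2 = 1 := by omega
        have hd : (n + 1) / 2 = n / 2 := by omega
        refine ⟨by simp [Mcf, lblB, h2], ?_, ?_, ?_⟩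
        · intro s; fin_cases s <;> simp [mu1, piB, lblB, h2]
        · funext s
          fin_cases s <;>
            simp [mu1, piB, lblB, h2, h2', hd, ApplyRule]
        · intro h; simp [lblB, h2] at h; exact absurd h mu1_ne_eps
      · have h2 : n % 2 = 1 := Nat.odd_iff.mp ho
        have h2' : (n + 1) % 2 = 0 := by omega
        have hd : (n + 1) / 2 + 1 = n / 2 + 2 := by omega
        refine ⟨by simp [Mcf, lblB, h2], ?_, ?_, ?_⟩
        · intro s; fin_cases s <;> simp [mu2, piB, lblB, h2]
        · funext s
          fin_cases s <;>
            simp [mu2, piB, lblB, h2, h2', hd, ApplyRule]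
        · intro h; simp [lblB, h2] at h; exact absurd h mu2_ne_eps
  · intro i μ _ henab hz
    obtain ⟨hl, hμ⟩ := hz
    subst hμ
    -- `lblB (i+1) = mu2` forces `i + 1 = n + 2` with `n` odd, where B-count is 0
    match hi : i + 1 with
    | 0 => omega
    | 1 => rw [hi] at hl; exact mu1_ne_mu2 hl
    | (n + 2) =>
      rcases Nat.even_or_odd n with he | ho
      · have h2 : n % 2 = 0 := Nat.even_iff.mp he
        rw [hi] at hl; simp [lblB, h2] at hl; exact mu1_ne_mu2 hl
      · have h2 : n % 2 = 1 := Nat.odd_iff.mp ho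
        rw [hi] at henab
        have := henab 1
        simp [piB, h2, mu1] at this

/-- The counterexample run for the ordered system: apply the B-adding rule forever. -/
def runC : ℕ → MSet (Fin 3) := fun i => ![1, 1 + i, 0]

/-- `ζ = {(μ₂, μ₁)}` is a valid concurrent-free regulation, and for every
ordered MRS `M'` over `S = {A, B, C}`, the set of runs of the concurrent-free
MRS `(X, M₀, ζ)` above differs from the set of runs of `M'`: the generative
power of concurrent-free MRS is not included in that of ordered MRS. -/
theorem cf_not_subsumed_by_ordered :
    CFValid Mcf.X zetaCF ∧
      ∀ (M' : MRS (Fin 3)) (ζ' : Rule (Fin 3) → Rule (Fin 3) → Prop),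
        IsStrictOrderRel ζ' → orderedRuns M' ζ' ≠ cfRuns Mcf zetaCF := by
  constructor
  · refine ⟨?_, ?_, ?_⟩
    · rintro μ ⟨h1, h2⟩
      exact mu1_ne_mu2 (h2.symm.trans h1)
    · rintro μ ν ⟨hμ, hν⟩
      subst hμ; subst hν
      exact ⟨by simp [Mcf], by simp [Mcf], ⟨0, by simp [mu1, mu2]⟩⟩
    · rintro μ ν ⟨hμ, hν⟩ htg
      subst hμ; subst hν
      exact no_transgen_mu1 _ htg
  · intro M' ζ' hso heq
    -- transfer the cf run `piB` to the ordered system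
    have hb : piB ∈ orderedRuns M' ζ' := heq ▸ piB_mem_cfRuns
    obtain ⟨β, ⟨hb0, hbstep⟩, -⟩ := hb
    -- `β 0` is a rule of `M'` turning {A,B} into {A,B,B}
    obtain ⟨hβX, hβen, hβapp, -⟩ := hbstep 0
    have hβen' : ∀ s, (β 0).1 s ≤ (![1, 1, 0] : MSet (Fin 3)) s := hβen
    have hβapp' : ∀ s, (![1, 2, 0] : MSet (Fin 3)) s =
        (![1, 1, 0] : MSet (Fin 3)) s - (β 0).1 s + (β 0).2 s :=
      fun s => congrFun hβapp s
    -- the run that applies `β 0` forever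
    have hρmem : runC ∈ orderedRuns M' ζ' := by
      refine ⟨fun _ => β 0, ⟨?_, ?_⟩, fun i => hso.1 _⟩
      · have : piB 0 = runC 0 := by
          funext s; fin_cases s <;> simp [piB, runC]
        exact this ▸ hb0
      · intro i
        refine ⟨hβX, ?_, ?_, ?_⟩
        · intro s
          refine le_trans (hβen' s) ?_
          fin_cases s <;> simp [runC]
        · funext s
          have h1 := hβen' s
          have h2 := hβapp' s
          fin_cases s <;>
            simp only [runC, ApplyRule] <;>
            simp at h1 h2 ⊢ <;> omega
        · intro hε
          exfalso
          have := hβapp' 1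
          rw [show β 0 = epsRule (Fin 3) from hε] at this
          simp [epsRule] at this
    rw [heq] at hρmem
    obtain ⟨lbl, ⟨-, hstep⟩, hcf⟩ := hρmem
    -- the second step of `ρ` must be `μ₂`
    obtain ⟨hX1, -, happ1, -⟩ := hstep 1
    have hl1 : lbl 1 = mu2 := by
      have hX1' : lbl 1 = mu1 ∨ lbl 1 = mu2 ∨ lbl 1 = epsRule (Fin 3) := by
        simpa [Mcf, Set.mem_insert_iff] using hX1
      rcases hX1' with h | h | h
      · exfalso
        have := congrFun happ1 2
        rw [h] at this
        simp [runC, mu1, ApplyRule] at this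
      · exact h
      · exfalso
        have := congrFun happ1 1
        rw [h] at this
        simp [runC, epsRule, ApplyRule] at this
    -- but `μ₁` is enabled at `ρ 1`, so `μ₂` is forbidden: contradiction
    refine hcf 0 mu1 (by simp [Mcf]) ?_ ⟨hl1, rfl⟩
    intro s
    fin_cases s <;> simp [mu1, runC]
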